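/- The l-fold nested Poisson bracket satisfies the norm bound ‖{H_Λ, M^β}^{(l)}‖_∞ ≤ l! e^{|β|} ‖V‖^l, where {H,A}^{(l)} = {H, {H,A}^{(l-1)}}, {H,A}^{(0)} = A, the sup-norm is over the product of closed unit balls Ξ_Λ, and ‖V‖ := Σ_{n≥1} sup_x Σ_{|α|=n} |α(x)| |V(α)| e^n. -/

import Mathlib

open scoped BigOperators

/-- The index set `I = {+, z, -}` of complex spin coordinates. -/
inductive Idx : Type
  | plus | z | minus
deriving DecidableEq

instance : Fintype Idx :=
  ⟨{.plus, .z, .minus}, fun i => by cases i <;> first | decide | simp⟩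

/-- The symbol `ε̃_{ijk}`: `ε̃_{+−z} = 1`, `ε̃_{−+z} = −1`, `ε̃_{+z+} = −1`,
`ε̃_{−z−} = 1`, `ε̃_{z++} = 1`, `ε̃_{z−−} = −1`, and `ε̃_{ijk} = 0` otherwise. -/
def eps : Idx → Idx → Idx → ℂ
  | .plus, .minus, .z => 1
  | .minus, .plus, .z => -1
  | .plus, .z, .plus => -1
  | .minus, .z, .minus => 1
  | .z, .plus, .plus => 1
  | .z, .minus, .minus => -1
  | _, _, _ => 0

/-- Conjugation `+ ↦ −`, `z ↦ z`, `− ↦ +` on the index set. -/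
def Idx.bar : Idx → Idx
  | .plus => .minus
  | .z => .z
  | .minus => .plus

/-- The complex coordinates `(M_+, M_z, M_-)` of a vector `M ∈ ℝ³`:
`M_± = (M_1 ± i M_2)/√2`, `M_z = M_3`. -/
noncomputable def coord : Idx → (Fin 3 → ℝ) → ℂ
  | .plus => fun v => ((v 0 : ℂ) + Complex.I * (v 1 : ℂ)) / (Real.sqrt 2 : ℂ)
  | .z => fun v => (v 2 : ℂ)
  | .minus => fun v => ((v 0 : ℂ) - Complex.I * (v 1 : ℂ)) / (Real.sqrt 2 : ℂ)

variable {Λ : Type*}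

/-- Membership in the phase space `Ξ_Λ = Π_{x∈Λ} B̄₁(0)`. -/
def inBall (M : Λ → Fin 3 → ℝ) : Prop :=
  ∀ x, (M x 0) ^ 2 + (M x 1) ^ 2 + (M x 2) ^ 2 ≤ 1

/-- The monomial `M^α`. -/
noncomputable def monom (α : (Idx × Λ) →₀ ℕ) : MvPolynomial (Idx × Λ) ℂ :=
  MvPolynomial.monomial α 1

/-- Evaluation of a polynomial observable at a spin configuration `M`. -/
noncomputable def evalAt (M : Λ → Fin 3 → ℝ) (F : MvPolynomial (Idx × Λ) ℂ) : ℂ :=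
  MvPolynomial.eval (fun p => coord p.1 (M p.2)) F

/-- Evaluation of the monomial `M^γ` at a (possibly infinite-volume) spin
configuration `M`. -/
noncomputable def evalMonom (M : Λ → Fin 3 → ℝ) (γ : (Idx × Λ) →₀ ℕ) : ℂ :=
  γ.prod fun p m => (coord p.1 (M p.2)) ^ m

/-- The degree `|α|` of a multi-index. -/
def deg (α : (Idx × Λ) →₀ ℕ) : ℕ := α.sum fun _ m => m

/-- `|α(x)| = Σ_{i∈I} α_i(x)`. -/
def wt (α : (Idx × Λ) →₀ ℕ) (x : Λ) : ℕ := ∑ i : Idx, α (i, x)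

/-- The conjugate multi-index `ᾱ`, with `ᾱ_i(x) = α_{ī}(x)`. -/
def barMulti [DecidableEq Λ] (α : (Idx × Λ) →₀ ℕ) : (Idx × Λ) →₀ ℕ :=
  α.equivMapDomain
    (Equiv.prodCongr ⟨Idx.bar, Idx.bar, fun i => by cases i <;> rfl,
      fun i => by cases i <;> rfl⟩ (Equiv.refl Λ))

/-- `Σ_{|α| = n} |α(x)| |V(α)|`. -/
noncomputable def VnormPart (V : ((Idx × Λ) →₀ ℕ) → ℂ) (n : ℕ) (x : Λ) : ℝ :=
  ∑' α : {α : (Idx × Λ) →₀ ℕ // deg α = n}, (wt α.1 x : ℝ) * ‖V α.1‖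

/-- The norm `‖V‖ = Σ_n sup_x Σ_{|α|=n} |α(x)| |V(α)| e^n` of an interaction
potential. -/
noncomputable def Vnorm [Nonempty Λ] (V : ((Idx × Λ) →₀ ℕ) → ℂ) : ℝ :=
  ∑' n : ℕ, (⨆ x : Λ, VnormPart V n x) * Real.exp n

section Bracket

variable [Fintype Λ] [DecidableEq Λ]

/-- The Poisson bracket on the polynomial algebra `P_Λ`, the unique biderivation
with `{M_i(x), M_j(y)} = i ε̃_{ijk} δ(x,y) M_k(x)`. -/
noncomputable def pb (F G : MvPolynomial (Idx × Λ) ℂ) : MvPolynomial (Idx × Λ) ℂ :=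
  ∑ x : Λ, ∑ i : Idx, ∑ j : Idx, ∑ k : Idx,
    MvPolynomial.C (Complex.I * eps i j k) *
      (MvPolynomial.pderiv (i, x) F) * (MvPolynomial.pderiv (j, x) G) *
        MvPolynomial.X (k, x)

/-- The iterated Poisson bracket `{H, A}^{(l)}`. -/
noncomputable def pbIter (H : MvPolynomial (Idx × Λ) ℂ) :
    ℕ → MvPolynomial (Idx × Λ) ℂ → MvPolynomial (Idx × Λ) ℂ
  | 0, A => A
  | l + 1, A => pb H (pbIter H l A)

/-- The sup-norm `‖A‖_∞ = sup_{M ∈ Ξ_Λ} |A(M)|` of a polynomial observable. -/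
noncomputable def supNorm (F : MvPolynomial (Idx × Λ) ℂ) : ℝ :=
  ⨆ M : {M : Λ → Fin 3 → ℝ // inBall M}, ‖evalAt M.1 F‖

/-- The classical Hamilton function `H_Λ = Σ_α V(α) M^α` of a finitely supported
interaction potential. -/
noncomputable def Hcl (V : ((Idx × Λ) →₀ ℕ) →₀ ℂ) : MvPolynomial (Idx × Λ) ℂ :=
  ∑ α ∈ V.support, MvPolynomial.C (V α) * monom α

end Bracket

/-! Cauchy estimates for the weighted ℓ¹ norms `‖F‖_t = Σ_γ |F_γ| e^{t|γ|}` of coefficient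
sequences. One bracket with `H_Λ` lowers the degree of a monomial by one and produces a factor
`|γ|`, which costs shrinking the weight from `t + c` to `t`:
`‖{H_Λ, A}‖_t ≤ ‖V‖ / (e c) · ‖A‖_{t+c}`, since `|γ| e^{-c|γ|} ≤ 1/(e c)`. Iterating `l` times
with `c = 1/l` and bounding the sup-norm on `Ξ_Λ` by `‖·‖_0` gives
`(l ‖V‖ / e)^l e^{|β|}`, and `(l/e)^l ≤ l!`. -/

open MvPolynomial

lemma Idx.sum_univ {M : Type*} [AddCommMonoid M] (f : Idx → M) :
    ∑ k : Idx, f k = f .plus + f .z + f .minus := by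
  rw [show (Finset.univ : Finset Idx) = {Idx.plus, Idx.z, Idx.minus} by decide,
    Finset.sum_insert (by decide), Finset.sum_insert (by decide), Finset.sum_singleton, add_assoc]

lemma sum_norm_eps_le_one (i j : Idx) : ∑ k : Idx, ‖eps i j k‖ ≤ 1 := by
  cases i <;> cases j <;> simp [Idx.sum_univ, eps]

lemma norm_coord_le_one {v : Fin 3 → ℝ} (hv : v 0 ^ 2 + v 1 ^ 2 + v 2 ^ 2 ≤ 1) (i : Idx) :
    ‖coord i v‖ ≤ 1 := by
  rw [← sq_le_one_iff₀ (norm_nonneg _), Complex.sq_norm]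
  cases i <;> simp [coord, Complex.normSq_apply] <;>
    nlinarith [sq_nonneg (v 0), sq_nonneg (v 1), sq_nonneg (v 2)]

lemma deg_add (α β : (Idx × Λ) →₀ ℕ) : deg (α + β) = deg α + deg β :=
  Finsupp.sum_add_index' (fun _ => rfl) fun _ _ _ => rfl

lemma deg_single (p : Idx × Λ) (n : ℕ) : deg (Finsupp.single p n) = n :=
  Finsupp.sum_single_index rfl

lemma deg_tsub_single_add_one {α : (Idx × Λ) →₀ ℕ} {p : Idx × Λ} (h : α p ≠ 0) :
    deg (α - Finsupp.single p 1) + 1 = deg α := by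
  have hp : Finsupp.single p 1 ≤ α := Finsupp.single_le_iff.mpr (Nat.one_le_iff_ne_zero.mpr h)
  conv_rhs => rw [← tsub_add_cancel_of_le hp]
  rw [deg_add, deg_single]

lemma sum_wt_eq_deg [Fintype Λ] (γ : (Idx × Λ) →₀ ℕ) : ∑ x : Λ, wt γ x = deg γ := by
  rw [deg, Finsupp.sum_fintype _ _ fun _ => rfl, Fintype.sum_prod_type, Finset.sum_comm]
  rfl

noncomputable def weightedNorm (t : ℝ) (F : MvPolynomial (Idx × Λ) ℂ) : ℝ :=
  ∑ γ ∈ F.support, ‖F.coeff γ‖ * Real.exp (t * deg γ)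

lemma weightedNorm_nonneg (t : ℝ) (F : MvPolynomial (Idx × Λ) ℂ) : 0 ≤ weightedNorm t F :=
  Finset.sum_nonneg fun _ _ => by positivity

lemma weightedNorm_eq_sum_of_support_subset {t : ℝ} {F : MvPolynomial (Idx × Λ) ℂ}
    {s : Finset ((Idx × Λ) →₀ ℕ)} (h : F.support ⊆ s) :
    weightedNorm t F = ∑ γ ∈ s, ‖F.coeff γ‖ * Real.exp (t * deg γ) :=
  Finset.sum_subset h fun γ _ hγ => by simp [notMem_support_iff.mp hγ]

lemma weightedNorm_zero (t : ℝ) : weightedNorm t (0 : MvPolynomial (Idx × Λ) ℂ) = 0 := by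
  simp [weightedNorm]

lemma weightedNorm_add_le (t : ℝ) (F G : MvPolynomial (Idx × Λ) ℂ) :
    weightedNorm t (F + G) ≤ weightedNorm t F + weightedNorm t G := by
  classical
  rw [weightedNorm_eq_sum_of_support_subset support_add,
    weightedNorm_eq_sum_of_support_subset Finset.subset_union_left,
    weightedNorm_eq_sum_of_support_subset Finset.subset_union_right, ← Finset.sum_add_distrib]
  gcongr with γ
  rw [coeff_add, ← add_mul]
  gcongr
  exact norm_add_le _ _

lemma weightedNorm_sum_le {ι : Type*} (t : ℝ) (s : Finset ι)
    (f : ι → MvPolynomial (Idx × Λ) ℂ) :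
    weightedNorm t (∑ a ∈ s, f a) ≤ ∑ a ∈ s, weightedNorm t (f a) :=
  Finset.le_sum_of_subadditive _ (weightedNorm_zero t).le (weightedNorm_add_le t) s f

lemma weightedNorm_monomial_le (t : ℝ) (δ : (Idx × Λ) →₀ ℕ) (c : ℂ) :
    weightedNorm t (monomial δ c) ≤ ‖c‖ * Real.exp (t * deg δ) := by
  classical
  rw [weightedNorm_eq_sum_of_support_subset support_monomial_subset]
  simp

lemma weightedNorm_monom (t : ℝ) (β : (Idx × Λ) →₀ ℕ) :
    weightedNorm t (monom β) = Real.exp (t * deg β) := by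
  classical
  simp [weightedNorm, monom, support_monomial, coeff_monomial]

lemma weightedNorm_mono {t t' : ℝ} (h : t ≤ t') (F : MvPolynomial (Idx × Λ) ℂ) :
    weightedNorm t F ≤ weightedNorm t' F := by
  unfold weightedNorm
  gcongr

lemma norm_evalAt_le_weightedNorm_zero {M : Λ → Fin 3 → ℝ} (hM : inBall M)
    (F : MvPolynomial (Idx × Λ) ℂ) : ‖evalAt M F‖ ≤ weightedNorm 0 F := by
  rw [evalAt, eval_eq, weightedNorm]
  refine (norm_sum_le _ _).trans (Finset.sum_le_sum fun γ _ => ?_)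
  rw [norm_mul, norm_prod, zero_mul, Real.exp_zero, mul_one]
  refine mul_le_of_le_one_right (norm_nonneg _) <|
    Finset.prod_le_one (fun _ _ => norm_nonneg _) fun p _ => ?_
  rw [norm_pow]
  exact pow_le_one₀ (norm_nonneg _) (norm_coord_le_one (hM p.2) _)

lemma supNorm_le_weightedNorm_zero (F : MvPolynomial (Idx × Λ) ℂ) :
    supNorm F ≤ weightedNorm 0 F :=
  have : Nonempty {M : Λ → Fin 3 → ℝ // inBall M} := ⟨⟨0, fun _ => by simp⟩⟩
  ciSup_le fun M => norm_evalAt_le_weightedNorm_zero M.2 F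

lemma weightedNorm_pb_monomial_term_le (t : ℝ) (α γ : (Idx × Λ) →₀ ℕ) (c d : ℂ) (x : Λ)
    (i j k : Idx) :
    weightedNorm t (monomial
        (α - Finsupp.single (i, x) 1 + (γ - Finsupp.single (j, x) 1) + Finsupp.single (k, x) 1)
        (Complex.I * eps i j k * (c * α (i, x)) * (d * γ (j, x)))) ≤
      ‖eps i j k‖ * (‖c‖ * ‖d‖ * ((α (i, x) : ℝ) * γ (j, x)) *
        Real.exp (t * deg α + t * deg γ - t)) := by
  by_cases hzero : α (i, x) = 0 ∨ γ (j, x) = 0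
  · have : (Complex.I * eps i j k * (c * α (i, x)) * (d * γ (j, x))) = 0 := by
      rcases hzero with h | h <;> simp [h]
    rw [this, map_zero, weightedNorm_zero]
    positivity
  push Not at hzero
  refine (weightedNorm_monomial_le _ _ _).trans (le_of_eq ?_)
  have hα := deg_tsub_single_add_one hzero.1
  have hγ := deg_tsub_single_add_one hzero.2
  simp only [norm_mul, Complex.norm_I, Complex.norm_natCast, deg_add, deg_single, ← hα, ← hγ]
  push_cast
  ring_nf

section Bracket

variable [Fintype Λ]

lemma pb_add_left (F₁ F₂ G : MvPolynomial (Idx × Λ) ℂ) :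
    pb (F₁ + F₂) G = pb F₁ G + pb F₂ G := by
  simp [pb, add_mul, mul_add, Finset.sum_add_distrib]

lemma pb_add_right (F G₁ G₂ : MvPolynomial (Idx × Λ) ℂ) :
    pb F (G₁ + G₂) = pb F G₁ + pb F G₂ := by
  simp [pb, add_mul, mul_add, Finset.sum_add_distrib]

lemma pb_sum_left {ι : Type*} (s : Finset ι) (f : ι → MvPolynomial (Idx × Λ) ℂ)
    (G : MvPolynomial (Idx × Λ) ℂ) : pb (∑ a ∈ s, f a) G = ∑ a ∈ s, pb (f a) G :=
  map_sum (AddMonoidHom.mk' (pb · G) fun F₁ F₂ => pb_add_left F₁ F₂ G) f s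

lemma pb_sum_right {ι : Type*} (F : MvPolynomial (Idx × Λ) ℂ) (s : Finset ι)
    (f : ι → MvPolynomial (Idx × Λ) ℂ) : pb F (∑ a ∈ s, f a) = ∑ a ∈ s, pb F (f a) :=
  map_sum (AddMonoidHom.mk' (pb F) (pb_add_right F)) f s

lemma pb_monomial_monomial (α γ : (Idx × Λ) →₀ ℕ) (c d : ℂ) :
    pb (monomial α c) (monomial γ d) =
      ∑ x : Λ, ∑ i : Idx, ∑ j : Idx, ∑ k : Idx,
        monomial
          (α - Finsupp.single (i, x) 1 + (γ - Finsupp.single (j, x) 1) + Finsupp.single (k, x) 1)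
          (Complex.I * eps i j k * (c * α (i, x)) * (d * γ (j, x))) := by
  unfold pb
  refine Finset.sum_congr rfl fun x _ => Finset.sum_congr rfl fun i _ =>
    Finset.sum_congr rfl fun j _ => Finset.sum_congr rfl fun k _ => ?_
  rw [pderiv_monomial, pderiv_monomial, X, C_mul_monomial, monomial_mul, monomial_mul, mul_one]

lemma weightedNorm_pb_monomial_le (t : ℝ) (α γ : (Idx × Λ) →₀ ℕ) (c d : ℂ) :
    weightedNorm t (pb (monomial α c) (monomial γ d)) ≤
      ∑ x : Λ, ‖c‖ * ‖d‖ * ((wt α x : ℝ) * wt γ x) * Real.exp (t * deg α + t * deg γ - t) := by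
  rw [pb_monomial_monomial]
  refine (weightedNorm_sum_le _ _ _).trans (Finset.sum_le_sum fun x _ => ?_)
  set E := ‖c‖ * ‖d‖ * Real.exp (t * deg α + t * deg γ - t)
  calc _ ≤ ∑ i : Idx, ∑ j : Idx, ∑ k : Idx, ‖eps i j k‖ * (‖c‖ * ‖d‖ *
          ((α (i, x) : ℝ) * γ (j, x)) * Real.exp (t * deg α + t * deg γ - t)) := by
        refine (weightedNorm_sum_le _ _ _).trans <| Finset.sum_le_sum fun i _ =>
          (weightedNorm_sum_le _ _ _).trans <| Finset.sum_le_sum fun j _ =>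
          (weightedNorm_sum_le _ _ _).trans <| Finset.sum_le_sum fun k _ =>
            weightedNorm_pb_monomial_term_le t α γ c d x i j k
    _ ≤ ∑ i : Idx, ∑ j : Idx, (α (i, x) : ℝ) * γ (j, x) * E := by
        gcongr with i _ j _
        rw [← Finset.sum_mul]
        refine (mul_le_of_le_one_left (by positivity) (sum_norm_eps_le_one i j)).trans_eq ?_
        ring
    _ = (wt α x : ℝ) * wt γ x * E := by
        rw [wt, wt, Nat.cast_sum, Nat.cast_sum, Finset.sum_mul_sum, Finset.sum_mul]
        simp only [Finset.sum_mul]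
    _ = _ := by ring

end Bracket

section Potential

lemma VnormPart_eq_sum (V : ((Idx × Λ) →₀ ℕ) →₀ ℂ) (n : ℕ) (x : Λ) :
    VnormPart (fun α => V α) n x = ∑ α ∈ V.support with deg α = n, (wt α x : ℝ) * ‖V α‖ := by
  rw [VnormPart, tsum_eq_sum (s := V.support.subtype (deg · = n)) fun α hα => by
      simp [Finsupp.notMem_support_iff.mp fun h => hα (Finset.mem_subtype.mpr h)]]
  exact Finset.sum_subtype_eq_sum_filter (fun α => (wt α x : ℝ) * ‖V α‖) (p := (deg · = n))

variable [Fintype Λ] [Nonempty Λ]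

lemma sum_norm_mul_wt_mul_exp_le_Vnorm (V : ((Idx × Λ) →₀ ℕ) →₀ ℂ) {t : ℝ} (ht : t ≤ 1)
    (x : Λ) :
    ∑ α ∈ V.support, ‖V α‖ * wt α x * Real.exp (t * deg α) ≤ Vnorm (fun α => V α) := by
  classical
  set D := V.support.image deg
  have hVnorm : Vnorm (fun α => V α) =
      ∑ n ∈ D, (⨆ y : Λ, VnormPart (fun α => V α) n y) * Real.exp n := by
    refine tsum_eq_sum fun n hn => ?_
    have hempty : V.support.filter (deg · = n) = ∅ :=
      Finset.filter_eq_empty_iff.mpr fun α hα hdeg => hn (hdeg ▸ Finset.mem_image_of_mem deg hα)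
    simp [VnormPart_eq_sum, hempty]
  rw [hVnorm, ← Finset.sum_fiberwise_of_maps_to fun α hα => Finset.mem_image_of_mem deg hα]
  gcongr with n
  calc ∑ α ∈ V.support with deg α = n, ‖V α‖ * wt α x * Real.exp (t * deg α)
      ≤ ∑ α ∈ V.support with deg α = n, (wt α x : ℝ) * ‖V α‖ * Real.exp n := by
        refine Finset.sum_le_sum fun α hα => ?_
        rw [(Finset.mem_filter.mp hα).2, mul_comm ‖V α‖]
        gcongr
        exact mul_le_of_le_one_left (Nat.cast_nonneg n) ht
    _ = VnormPart (fun α => V α) n x * Real.exp n := by rw [VnormPart_eq_sum, Finset.sum_mul]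
    _ ≤ (⨆ y : Λ, VnormPart (fun α => V α) n y) * Real.exp n := by
        gcongr
        exact le_ciSup (Set.finite_range _).bddAbove x

lemma Vnorm_nonneg (V : ((Idx × Λ) →₀ ℕ) →₀ ℂ) : 0 ≤ Vnorm (fun α => V α) :=
  have x : Λ := Classical.arbitrary Λ
  (Finset.sum_nonneg fun _ _ => by positivity).trans
    (sum_norm_mul_wt_mul_exp_le_Vnorm V le_rfl x)

end Potential

lemma mul_exp_le_exp_div {t c : ℝ} (ht : 0 ≤ t) (hc : 0 < c) (m : ℕ) :
    m * Real.exp (t * m - t) ≤ Real.exp ((t + c) * m) / (Real.exp 1 * c) := by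
  rw [le_div_iff₀ (by positivity)]
  have hcm : c * m * Real.exp 1 ≤ Real.exp (c * m) := by
    have := Real.add_one_le_exp (c * m - 1)
    rw [Real.exp_sub] at this
    rw [← le_div_iff₀ (Real.exp_pos 1)]
    linarith
  calc m * Real.exp (t * m - t) * (Real.exp 1 * c)
      = c * m * Real.exp 1 * Real.exp (t * m - t) := by ring
    _ ≤ Real.exp (c * m) * Real.exp (t * m) := by gcongr; linarith
    _ = Real.exp ((t + c) * m) := by rw [← Real.exp_add]; ring_nf

section Cauchy

variable [Fintype Λ] [Nonempty Λ]

lemma weightedNorm_pb_Hcl_monomial_le (V : ((Idx × Λ) →₀ ℕ) →₀ ℂ) {t : ℝ} (ht : t ≤ 1)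
    (γ : (Idx × Λ) →₀ ℕ) (d : ℂ) :
    weightedNorm t (pb (Hcl V) (monomial γ d)) ≤
      Vnorm (fun α => V α) * ‖d‖ * (deg γ * Real.exp (t * deg γ - t)) := by
  have hHcl : Hcl V = ∑ α ∈ V.support, monomial α (V α) :=
    Finset.sum_congr rfl fun α _ => by rw [monom, C_mul_monomial, mul_one]
  rw [hHcl, pb_sum_left]
  refine (weightedNorm_sum_le _ _ _).trans ?_
  calc ∑ α ∈ V.support, weightedNorm t (pb (monomial α (V α)) (monomial γ d))
      ≤ ∑ α ∈ V.support, ∑ x : Λ, ‖V α‖ * ‖d‖ * ((wt α x : ℝ) * wt γ x) *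
          Real.exp (t * deg α + t * deg γ - t) :=
        Finset.sum_le_sum fun α _ => weightedNorm_pb_monomial_le t α γ (V α) d
    _ = ∑ x : Λ, (∑ α ∈ V.support, ‖V α‖ * wt α x * Real.exp (t * deg α)) *
          (‖d‖ * wt γ x * Real.exp (t * deg γ - t)) := by
        rw [Finset.sum_comm]
        refine Finset.sum_congr rfl fun x _ => ?_
        rw [Finset.sum_mul]
        refine Finset.sum_congr rfl fun α _ => ?_
        rw [add_sub_assoc, Real.exp_add]
        ring
    _ ≤ ∑ x : Λ, Vnorm (fun α => V α) * (‖d‖ * wt γ x * Real.exp (t * deg γ - t)) := by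
        gcongr with x
        exact sum_norm_mul_wt_mul_exp_le_Vnorm V ht x
    _ = _ := by
        rw [← Finset.mul_sum, ← Finset.sum_mul, ← Finset.mul_sum, ← Nat.cast_sum, sum_wt_eq_deg]
        ring

lemma weightedNorm_pb_Hcl_le (V : ((Idx × Λ) →₀ ℕ) →₀ ℂ) {t c : ℝ} (ht0 : 0 ≤ t)
    (ht1 : t ≤ 1) (hc : 0 < c) (A : MvPolynomial (Idx × Λ) ℂ) :
    weightedNorm t (pb (Hcl V) A) ≤
      Vnorm (fun α => V α) / (Real.exp 1 * c) * weightedNorm (t + c) A := by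
  conv_lhs => rw [← support_sum_monomial_coeff A, pb_sum_right]
  refine (weightedNorm_sum_le _ _ _).trans ?_
  rw [weightedNorm, Finset.mul_sum]
  gcongr with γ
  refine (weightedNorm_pb_Hcl_monomial_le V ht1 γ _).trans ?_
  have := mul_exp_le_exp_div ht0 hc (deg γ)
  calc Vnorm (fun α => V α) * ‖A.coeff γ‖ * (deg γ * Real.exp (t * deg γ - t))
      ≤ Vnorm (fun α => V α) * ‖A.coeff γ‖ * (Real.exp ((t + c) * deg γ) / (Real.exp 1 * c)) := by
        have := Vnorm_nonneg V
        gcongr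
    _ = _ := by ring

lemma weightedNorm_pbIter_Hcl_le (V : ((Idx × Λ) →₀ ℕ) →₀ ℂ) (A : MvPolynomial (Idx × Λ) ℂ)
    {c : ℝ} (hc : 0 < c) {m : ℕ} (hm : m * c ≤ 1) :
    weightedNorm (1 - m * c) (pbIter (Hcl V) m A) ≤
      (Vnorm (fun α => V α) / (Real.exp 1 * c)) ^ m * weightedNorm 1 A := by
  induction m with
  | zero => simp [pbIter]
  | succ m ih =>
    push_cast at hm ⊢
    have hstep := weightedNorm_pb_Hcl_le V (t := 1 - (m + 1) * c) (by linarith)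
      (by nlinarith) hc (pbIter (Hcl V) m A)
    rw [show 1 - (m + 1) * c + c = 1 - m * c by ring] at hstep
    refine hstep.trans ?_
    rw [pow_succ', mul_assoc]
    gcongr
    · exact div_nonneg (Vnorm_nonneg V) (by positivity)
    · exact ih (by nlinarith)

end Cauchy

lemma div_exp_one_pow_le_factorial (l : ℕ) : ((l : ℝ) / Real.exp 1) ^ l ≤ l.factorial := by
  rw [div_pow, ← Real.exp_nat_mul, mul_one, div_le_iff₀ (Real.exp_pos _), mul_comm,
    ← div_le_iff₀ (by positivity)]
  exact Real.pow_div_factorial_le_exp _ (Nat.cast_nonneg l) l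

lemma supNorm_pbIter_Hcl_le [Fintype Λ] [Nonempty Λ] (V : ((Idx × Λ) →₀ ℕ) →₀ ℂ)
    (A : MvPolynomial (Idx × Λ) ℂ) (l : ℕ) :
    supNorm (pbIter (Hcl V) l A) ≤
      l.factorial * Vnorm (fun α => V α) ^ l * weightedNorm 1 A := by
  refine (supNorm_le_weightedNorm_zero _).trans ?_
  obtain rfl | hl := Nat.eq_zero_or_pos l
  · simpa [pbIter] using weightedNorm_mono zero_le_one A
  have hl' : (l : ℝ) ≠ 0 := by positivity
  have key := weightedNorm_pbIter_Hcl_le V A (c := 1 / l) (by positivity) (m := l)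
    (mul_one_div_cancel hl').le
  have hratio : Vnorm (fun α => V α) / (Real.exp 1 * (1 / l)) =
      Vnorm (fun α => V α) * (l / Real.exp 1) := by
    field_simp
  rw [mul_one_div_cancel hl', sub_self, hratio, mul_pow] at key
  refine key.trans ?_
  rw [mul_comm (l.factorial : ℝ)]
  have := weightedNorm_nonneg 1 A
  have := Vnorm_nonneg V
  gcongr
  exact div_exp_one_pow_le_factorial l

theorem nested_bracket_bound_general {Λ : Type} [Fintype Λ] [Nonempty Λ]
    (V : ((Idx × Λ) →₀ ℕ) →₀ ℂ) (β : (Idx × Λ) →₀ ℕ) (l : ℕ) :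
    supNorm (pbIter (Hcl V) l (monom β)) ≤
      (l.factorial : ℝ) * Real.exp (deg β) * (Vnorm fun α => V α) ^ l := by
  have := supNorm_pbIter_Hcl_le V (monom β) l
  rwa [weightedNorm_monom, one_mul, mul_right_comm] at this

/-- **Nested Poisson bracket bound.**
For the Hamilton function `H_Λ = Σ_α V(α) M^α` on the phase space
`Ξ_Λ = Π_{x∈Λ} B̄₁(0)`, the `l`-fold nested Poisson bracket satisfies
`‖{H_Λ, M^β}^{(l)}‖_∞ ≤ l! e^{|β|} ‖V‖^l`, where
`‖V‖ = Σ_n sup_x Σ_{|α|=n} |α(x)| |V(α)| e^n`. -/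
theorem nested_bracket_bound {Λ : Type} [Fintype Λ] [DecidableEq Λ] [Nonempty Λ]
    (V : ((Idx × Λ) →₀ ℕ) →₀ ℂ) (β : (Idx × Λ) →₀ ℕ) (l : ℕ) :
    supNorm (pbIter (Hcl V) l (monom β)) ≤
      (l.factorial : ℝ) * Real.exp (deg β) * (Vnorm fun α => V α) ^ l :=
  nested_bracket_bound_general V β l
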